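/- arXiv:alg-geom/9407010 — 2 statements merged into one kernel-verified Lean document; each statement's English description precedes it below -/
import Mathlib

section
/- Let k be a field of characteristic zero and let M^• be a cosimplicial Σ•-module over k, with differential A* = Σ_{j=0}^{n} (−1)^j A_j : M^{n−1} → M^n (so that A*∘A* = 0) and cohomology H^n(M^•) = ker(A*: M^n → M^{n+1})/im(A*: M^{n−1} → M^n). Then sM^• and rM^• are subcomplexes, and the natural map H^n(sM^•) ⊕ H^n(rM^•) → H^n(M^•) induced by the inclusions of subcomplexes is an isomorphism for every n; that is, the cohomology of M^• has a sign decomposition H^•(M^•) = sH^•(M^•) ⊕ rH^•(M^•). -/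
/-!
`Alt` is an idempotent that commutes with the differential, `Alt ∘ A* = A* ∘ Alt`; so it splits
`M^•` as the direct sum of the complexes `sM^• = im Alt` and `rM^• = ker Alt`, and cohomology
splits accordingly.

For the commutation it suffices that `A*` preserves `sM^•` and that `Alt ∘ A_j ∘ Alt = Alt ∘ A_j`.
The first holds because the adjacent transposition `(i-1, i)` exchanges the terms `A_{i-1}` and
`A_i` of `A*`, which carry opposite signs, and acts by `-1` on the other terms of an alternating
cochain. The second holds because `A_j ∘ σ = π ∘ A_j` for some `π` with the sign of `σ`, which
is checked on adjacent transpositions.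
-/

/-- The alternating operator `Alt = (1/N!) Σ_{σ ∈ Σ_N} sgn(σ) σ` associated to a linear
action `ρ` of the symmetric group `Σ_N` on a `k`-vector space. -/
noncomputable def altOp (k : Type*) [Field k] {M : Type*} [AddCommGroup M] [Module k M]
    {N : ℕ} (ρ : Equiv.Perm (Fin N) →* Module.End k M) : Module.End k M :=
  (Nat.factorial N : k)⁻¹ •
    ∑ σ : Equiv.Perm (Fin N), (((Equiv.Perm.sign σ : ℤ) : k)) • ρ σ

/-- The differential `A* = Σ_{j} (−1)^j A_j : M^n → M^{n+1}` of a cosimplicial module. -/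
noncomputable def AStar {k : Type*} [Field k] {M : ℕ → Type*}
    [∀ n, AddCommGroup (M n)] [∀ n, Module k (M n)]
    (A : ∀ n, ℕ → (M n →ₗ[k] M (n + 1))) (n : ℕ) : M n →ₗ[k] M (n + 1) :=
  ∑ j ∈ Finset.range (n + 2), ((-1 : k) ^ j) • A n j

open Equiv Equiv.Perm Finset

section Alternating

variable {k : Type*} [Field k] {V W : Type*} [AddCommGroup V] [Module k V]
  [AddCommGroup W] [Module k W] {N : ℕ} (ρ : Perm (Fin N) →* Module.End k V)

lemma sign_cast_mul_self (σ : Perm (Fin N)) : ((sign σ : ℤ) : k) * ((sign σ : ℤ) : k) = 1 := by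
  rw [← Int.cast_mul, ← Units.val_mul, Int.units_mul_self, Units.val_one, Int.cast_one]

lemma altOp_apply (v : V) :
    altOp k ρ v = (N.factorial : k)⁻¹ • ∑ σ, ((sign σ : ℤ) : k) • ρ σ v := by
  simp [altOp, LinearMap.sum_apply]

lemma map_altOp (σ : Perm (Fin N)) (v : V) :
    ρ σ (altOp k ρ v) = ((sign σ : ℤ) : k) • altOp k ρ v := by
  rw [altOp_apply, map_smul, map_sum, smul_comm]
  congr 1
  rw [smul_sum]
  refine Fintype.sum_equiv (Equiv.mulLeft σ) _ _ fun π => ?_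
  simp only [map_smul, coe_mulLeft, map_mul, Module.End.mul_apply, Units.val_mul, Int.cast_mul,
    smul_smul]
  rw [← mul_assoc, sign_cast_mul_self, one_mul]

lemma altOp_map (σ : Perm (Fin N)) (v : V) :
    altOp k ρ (ρ σ v) = ((sign σ : ℤ) : k) • altOp k ρ v := by
  rw [altOp_apply, altOp_apply, smul_comm]
  congr 1
  rw [smul_sum]
  refine Fintype.sum_equiv (Equiv.mulRight σ) _ _ fun π => ?_
  simp only [coe_mulRight, map_mul, Module.End.mul_apply, Units.val_mul, Int.cast_mul,
    smul_smul]
  rw [mul_left_comm, sign_cast_mul_self, mul_one]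

lemma map_eq_sign_smul_of_altOp_eq_self {v : V} (hv : altOp k ρ v = v) (σ : Perm (Fin N)) :
    ρ σ v = ((sign σ : ℤ) : k) • v := by
  rw [← hv, map_altOp]

variable [CharZero k]

lemma apply_altOp_of_forall_sign (f : V →ₗ[k] W) {v : V}
    (hf : ∀ σ, f (ρ σ v) = ((sign σ : ℤ) : k) • f v) : f (altOp k ρ v) = f v := by
  have hN : (N.factorial : k) ≠ 0 := Nat.cast_ne_zero.mpr N.factorial_ne_zero
  simp_rw [altOp_apply, map_smul, map_sum, map_smul, hf, smul_smul, sign_cast_mul_self, one_smul,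
    sum_const, card_univ, Fintype.card_perm, Fintype.card_fin, ← Nat.cast_smul_eq_nsmul k,
    smul_smul, inv_mul_cancel₀ hN, one_smul]

lemma altOp_eq_self_of_forall_sign {v : V} (h : ∀ σ, ρ σ v = ((sign σ : ℤ) : k) • v) :
    altOp k ρ v = v :=
  apply_altOp_of_forall_sign ρ LinearMap.id h

lemma isIdempotentElem_altOp : IsIdempotentElem (altOp k ρ) :=
  LinearMap.ext fun v => altOp_eq_self_of_forall_sign ρ (map_altOp ρ · v)

end Alternating

def adjSwap (n i : ℕ) (h : i ≤ n) : Perm (Fin (n + 1)) :=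
  swap ⟨i - 1, by omega⟩ ⟨i, by omega⟩

lemma sign_adjSwap {n i : ℕ} (hi : 1 ≤ i) (h : i ≤ n) : sign (adjSwap n i h) = -1 :=
  sign_swap (by simp only [ne_eq, Fin.mk.injEq]; omega)

lemma adjSwap_induction {n : ℕ} {P : Perm (Fin (n + 1)) → Prop} (one : P 1)
    (adjSwap_mul : ∀ i, 1 ≤ i → ∀ (h : i ≤ n) σ, P σ → P (adjSwap n i h * σ))
    (σ : Perm (Fin (n + 1))) : P σ := by
  have hσ : σ ∈ Submonoid.closure (Set.range fun a : Fin n => swap a.castSucc a.succ) := by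
    rw [mclosure_swap_castSucc_succ]; exact Submonoid.mem_top σ
  induction hσ using Submonoid.closure_induction_left with
  | one => exact one
  | mul_left x hx y _ hy =>
    obtain ⟨a, rfl⟩ := hx
    exact adjSwap_mul (a + 1) (by omega) a.isLt y hy

section IdempotentChainMap

variable {R V W : Type*} [Ring R] [AddCommGroup V] [Module R V] [AddCommGroup W] [Module R W]
  {d : V →ₗ[R] W} {e : Module.End R V} {e' : Module.End R W}

lemma eq_zero_and_eq_zero_of_add_eq_zero {vs vr : V} (hs : e vs = vs) (hr : e vr = 0)
    (h : vs + vr = 0) : vs = 0 ∧ vr = 0 := by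
  have hvs : vs = 0 := by simpa [hs, hr] using congr_arg e h
  exact ⟨hvs, by simpa [hvs] using h⟩

lemma exists_split_of_map_eq_zero (he : IsIdempotentElem e) (hd : e' ∘ₗ d = d ∘ₗ e) {v : V}
    (hv : d v = 0) : ∃ vs vr, e vs = vs ∧ e vr = 0 ∧ d vs = 0 ∧ d vr = 0 ∧ v = vs + vr := by
  have hev : e (e v) = e v := LinearMap.congr_fun he.eq v
  have hdev : d (e v) = 0 := by
    rw [← LinearMap.comp_apply, ← hd, LinearMap.comp_apply, hv, map_zero]
  exact ⟨e v, v - e v, hev, by rw [map_sub, hev, sub_self], hdev,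
    by rw [map_sub, hv, hdev, sub_self], (add_sub_cancel _ _).symm⟩

lemma exists_split_of_add_eq_map (he : IsIdempotentElem e) (hd : e' ∘ₗ d = d ∘ₗ e)
    {vs vr : W} {u : V} (hs : e' vs = vs) (hr : e' vr = 0) (hu : vs + vr = d u) :
    (∃ us, e us = us ∧ vs = d us) ∧ (∃ ur, e ur = 0 ∧ vr = d ur) := by
  have heu : e (e u) = e u := LinearMap.congr_fun he.eq u
  have hdeu : d (e u) = vs := by
    rw [← LinearMap.comp_apply, ← hd, LinearMap.comp_apply, ← hu, map_add, hs, hr, add_zero]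
  exact ⟨⟨e u, heu, hdeu.symm⟩, ⟨u - e u, by rw [map_sub, heu, sub_self],
    by rw [map_sub, hdeu, ← hu, add_sub_cancel_left]⟩⟩

end IdempotentChainMap

section Cosimplicial

variable {k : Type*} [Field k] {M : ℕ → Type*} [∀ n, AddCommGroup (M n)] [∀ n, Module k (M n)]

structure AdjSwapCompatible (ρ : ∀ n, Perm (Fin (n + 1)) →* Module.End k (M n))
    (A : ∀ n, ℕ → (M n →ₗ[k] M (n + 1))) : Prop where
  comp_lt : ∀ n i j, 1 ≤ i → ∀ hin : i ≤ n + 1, j + 1 < i →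
    ρ (n + 1) (adjSwap (n + 1) i hin) ∘ₗ A n j = A n j ∘ₗ ρ n (adjSwap n (i - 1) (by omega))
  comp_pred : ∀ n i, 1 ≤ i → ∀ hin : i ≤ n + 1,
    ρ (n + 1) (adjSwap (n + 1) i hin) ∘ₗ A n (i - 1) = A n i
  comp_self : ∀ n i, 1 ≤ i → ∀ hin : i ≤ n + 1,
    ρ (n + 1) (adjSwap (n + 1) i hin) ∘ₗ A n i = A n (i - 1)
  comp_gt : ∀ n i j, 1 ≤ i → ∀ hij : i < j, ∀ hjn : j ≤ n + 1,
    ρ (n + 1) (adjSwap (n + 1) i (by omega)) ∘ₗ A n j = A n j ∘ₗ ρ n (adjSwap n i (by omega))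

variable {ρ : ∀ n, Perm (Fin (n + 1)) →* Module.End k (M n)} {A : ∀ n, ℕ → (M n →ₗ[k] M (n + 1))}

lemma AStar_apply (n : ℕ) (v : M n) :
    AStar A n v = ∑ j ∈ range (n + 2), (-1 : k) ^ j • A n j v := by
  simp [AStar, LinearMap.sum_apply]

namespace AdjSwapCompatible

variable (hA : AdjSwapCompatible ρ A)
include hA

lemma adjSwap_coface_of_altOp_eq_self {n i j : ℕ} (hi : 1 ≤ i) (hin : i ≤ n + 1) (hjn : j ≤ n + 1)
    (hj₁ : j ≠ i - 1) (hj₂ : j ≠ i) {v : M n} (hv : altOp k (ρ n) v = v) :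
    ρ (n + 1) (adjSwap (n + 1) i hin) (A n j v) = -A n j v := by
  rcases lt_or_gt_of_ne hj₂ with hlt | hgt
  · rw [← LinearMap.comp_apply, hA.comp_lt n i j hi hin (by omega), LinearMap.comp_apply,
      map_eq_sign_smul_of_altOp_eq_self _ hv, sign_adjSwap (by omega)]
    simp
  · rw [← LinearMap.comp_apply, hA.comp_gt n i j hi hgt hjn, LinearMap.comp_apply,
      map_eq_sign_smul_of_altOp_eq_self _ hv, sign_adjSwap hi]
    simp

lemma adjSwap_AStar_of_altOp_eq_self {n i : ℕ} (hi : 1 ≤ i) (hin : i ≤ n + 1) {v : M n}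
    (hv : altOp k (ρ n) v = v) :
    ρ (n + 1) (adjSwap (n + 1) i hin) (AStar A n v) = -AStar A n v := by
  have hpow : (-1 : k) ^ i = -(-1) ^ (i - 1) := by
    nth_rewrite 1 [← Nat.sub_add_cancel hi]
    rw [pow_succ, mul_neg_one]
  simp only [AStar_apply, map_sum, map_smul, ← sum_neg_distrib]
  refine sum_equiv (swap (i - 1) i) (fun j => ?_) (fun j hj => ?_)
  · simp only [mem_range, swap_apply_def]
    split_ifs <;> omega
  · rw [mem_range] at hj
    rcases eq_or_ne j (i - 1) with rfl | hj₁
    · rw [swap_apply_left, ← LinearMap.comp_apply, hA.comp_pred n i hi hin, hpow, neg_smul,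
        neg_neg]
    rcases eq_or_ne j i with rfl | hj₂
    · rw [swap_apply_right, ← LinearMap.comp_apply, hA.comp_self n j hi hin, hpow, neg_smul]
    · rw [swap_apply_of_ne_of_ne hj₁ hj₂,
        hA.adjSwap_coface_of_altOp_eq_self hi hin (by omega) hj₁ hj₂ hv, smul_neg]

lemma exists_coface_comp_adjSwap {n i j : ℕ} (hi : 1 ≤ i) (hin : i ≤ n) (hjn : j ≤ n + 1) :
    ∃ π : Perm (Fin (n + 2)), sign π = -1 ∧
      A n j ∘ₗ ρ n (adjSwap n i hin) = ρ (n + 1) π ∘ₗ A n j := by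
  rcases lt_trichotomy j i with hlt | rfl | hgt
  · exact ⟨_, sign_adjSwap (by omega) (by omega),
      (hA.comp_lt n (i + 1) j (by omega) (by omega) (by omega)).symm⟩
  · -- `A_j ∘ (j-1, j) = (j-1, j) ∘ (j, j+1) ∘ (j-1, j) ∘ A_j`
    refine ⟨adjSwap (n + 1) j (by omega) * adjSwap (n + 1) (j + 1) (by omega) *
      adjSwap (n + 1) j (by omega), by simp [sign_adjSwap hi, sign_adjSwap], ?_⟩
    rw [map_mul, map_mul, Module.End.mul_eq_comp, Module.End.mul_eq_comp, LinearMap.comp_assoc,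
      hA.comp_self n j hi (by omega), LinearMap.comp_assoc,
      hA.comp_lt n (j + 1) (j - 1) (by omega) (by omega) (by omega), ← LinearMap.comp_assoc,
      hA.comp_pred n j hi (by omega)]
    rfl
  · exact ⟨_, sign_adjSwap hi (by omega), (hA.comp_gt n i j hi hgt hjn).symm⟩

lemma exists_coface_comp_eq {n j : ℕ} (hjn : j ≤ n + 1) (σ : Perm (Fin (n + 1))) :
    ∃ π : Perm (Fin (n + 2)), sign π = sign σ ∧ A n j ∘ₗ ρ n σ = ρ (n + 1) π ∘ₗ A n j := by
  induction σ using adjSwap_induction with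
  | one => exact ⟨1, by simp, by ext; simp⟩
  | adjSwap_mul i hi hin σ ih =>
    obtain ⟨π, hπ, hσ⟩ := ih
    obtain ⟨π', hπ', hτ⟩ := hA.exists_coface_comp_adjSwap hi hin hjn
    refine ⟨π' * π, by simp [hπ, hπ', sign_adjSwap hi], ?_⟩
    rw [map_mul, map_mul, Module.End.mul_eq_comp, Module.End.mul_eq_comp,
      ← LinearMap.comp_assoc, hτ, LinearMap.comp_assoc, hσ, LinearMap.comp_assoc]

variable [CharZero k]

lemma altOp_AStar_of_altOp_eq_self {n : ℕ} {v : M n} (hv : altOp k (ρ n) v = v) :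
    altOp k (ρ (n + 1)) (AStar A n v) = AStar A n v := by
  refine altOp_eq_self_of_forall_sign _ fun σ => ?_
  induction σ using adjSwap_induction with
  | one => simp
  | adjSwap_mul i hi hin σ ih =>
    rw [map_mul, Module.End.mul_apply, ih, map_smul,
      hA.adjSwap_AStar_of_altOp_eq_self hi hin hv, map_mul, sign_adjSwap hi]
    simp

lemma altOp_coface_altOp {n j : ℕ} (hjn : j ≤ n + 1) (v : M n) :
    altOp k (ρ (n + 1)) (A n j (altOp k (ρ n) v)) = altOp k (ρ (n + 1)) (A n j v) := by
  refine apply_altOp_of_forall_sign (ρ n) (altOp k (ρ (n + 1)) ∘ₗ A n j) fun σ => ?_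
  obtain ⟨π, hπ, hσ⟩ := hA.exists_coface_comp_eq hjn σ
  rw [LinearMap.comp_apply, LinearMap.comp_apply, ← LinearMap.comp_apply (A n j), hσ,
    LinearMap.comp_apply, altOp_map, hπ]

lemma altOp_comp_AStar (n : ℕ) :
    altOp k (ρ (n + 1)) ∘ₗ AStar A n = AStar A n ∘ₗ altOp k (ρ n) := by
  ext v
  calc altOp k (ρ (n + 1)) (AStar A n v)
      = altOp k (ρ (n + 1)) (AStar A n (altOp k (ρ n) v)) := by
        simp only [AStar_apply, map_sum, map_smul]
        exact sum_congr rfl fun j hj => by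
          rw [hA.altOp_coface_altOp (by rw [mem_range] at hj; omega)]
    _ = AStar A n (altOp k (ρ n) v) :=
        hA.altOp_AStar_of_altOp_eq_self (LinearMap.congr_fun (isIdempotentElem_altOp (ρ n)).eq v)

end AdjSwapCompatible

end Cosimplicial

/-- For a cosimplicial `Σ_•`-module `M^•` over a field of characteristic zero with
differential `A*` (satisfying `A* ∘ A* = 0`), the subspaces `sM^•` (fixed points of `Alt`)
and `rM^• = ker Alt` are subcomplexes, and the cohomology of `M^•` has a sign decomposition
`H^n(M^•) = H^n(sM^•) ⊕ H^n(rM^•)`: the map induced by the inclusions of the two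
subcomplexes is bijective on cohomology in every degree. -/
theorem cohomology_sign_decomposition
    (k : Type*) [Field k] [CharZero k]
    (M : ℕ → Type*) [∀ n, AddCommGroup (M n)] [∀ n, Module k (M n)]
    (ρ : ∀ n, Equiv.Perm (Fin (n + 1)) →* Module.End k (M n))
    (A : ∀ n, ℕ → (M n →ₗ[k] M (n + 1)))
    -- compatibility with adjacent transpositions:  (i−1,i) ∘ A_j = A_j ∘ (i−2,i−1) for j < i−1
    (hswap_lt : ∀ (n i j : ℕ), ∀ _ : 1 ≤ i, ∀ hin : i ≤ n + 1, j + 1 < i →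
      ((ρ (n + 1) (Equiv.swap (⟨i - 1, by omega⟩ : Fin (n + 2)) ⟨i, by omega⟩) :
          M (n + 1) →ₗ[k] M (n + 1))) ∘ₗ A n j
        = A n j ∘ₗ ((ρ n (Equiv.swap (⟨i - 2, by omega⟩ : Fin (n + 1)) ⟨i - 1, by omega⟩) :
            M n →ₗ[k] M n)))
    -- (i−1,i) ∘ A_{i−1} = A_i
    (hswap_eq1 : ∀ (n i : ℕ), ∀ _ : 1 ≤ i, ∀ hin : i ≤ n + 1,
      ((ρ (n + 1) (Equiv.swap (⟨i - 1, by omega⟩ : Fin (n + 2)) ⟨i, by omega⟩) :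
          M (n + 1) →ₗ[k] M (n + 1))) ∘ₗ A n (i - 1) = A n i)
    -- (i−1,i) ∘ A_i = A_{i−1}
    (hswap_eq2 : ∀ (n i : ℕ), ∀ _ : 1 ≤ i, ∀ hin : i ≤ n + 1,
      ((ρ (n + 1) (Equiv.swap (⟨i - 1, by omega⟩ : Fin (n + 2)) ⟨i, by omega⟩) :
          M (n + 1) →ₗ[k] M (n + 1))) ∘ₗ A n i = A n (i - 1))
    -- (i−1,i) ∘ A_j = A_j ∘ (i−1,i) for j > i
    (hswap_gt : ∀ (n i j : ℕ), ∀ _ : 1 ≤ i, ∀ hij : i < j, ∀ hjn : j ≤ n + 1,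
      ((ρ (n + 1) (Equiv.swap (⟨i - 1, by omega⟩ : Fin (n + 2)) ⟨i, by omega⟩) :
          M (n + 1) →ₗ[k] M (n + 1))) ∘ₗ A n j
        = A n j ∘ₗ ((ρ n (Equiv.swap (⟨i - 1, by omega⟩ : Fin (n + 1)) ⟨i, by omega⟩) :
            M n →ₗ[k] M n))) :
    -- sM^• is a subcomplex
    (∀ (n : ℕ) (v : M n), altOp k (ρ n) v = v →
      altOp k (ρ (n + 1)) (AStar A n v) = AStar A n v) ∧
    -- rM^• is a subcomplex
    (∀ (n : ℕ) (v : M n), altOp k (ρ n) v = 0 →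
      altOp k (ρ (n + 1)) (AStar A n v) = 0) ∧
    -- surjectivity on H^0 : every cocycle in M^0 is the sum of an s-cocycle and an r-cocycle
    (∀ v : M 0, AStar A 0 v = 0 →
      ∃ vs vr : M 0, altOp k (ρ 0) vs = vs ∧ altOp k (ρ 0) vr = 0 ∧
        AStar A 0 vs = 0 ∧ AStar A 0 vr = 0 ∧ v = vs + vr) ∧
    -- injectivity on H^0
    (∀ vs vr : M 0, altOp k (ρ 0) vs = vs → altOp k (ρ 0) vr = 0 →
      AStar A 0 vs = 0 → AStar A 0 vr = 0 → vs + vr = 0 → vs = 0 ∧ vr = 0) ∧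
    -- surjectivity on H^{n+1}
    (∀ (n : ℕ) (v : M (n + 1)), AStar A (n + 1) v = 0 →
      ∃ (vs vr : M (n + 1)) (u : M n),
        altOp k (ρ (n + 1)) vs = vs ∧ altOp k (ρ (n + 1)) vr = 0 ∧
        AStar A (n + 1) vs = 0 ∧ AStar A (n + 1) vr = 0 ∧ v = vs + vr + AStar A n u) ∧
    -- injectivity on H^{n+1}
    (∀ (n : ℕ) (vs vr : M (n + 1)),
      altOp k (ρ (n + 1)) vs = vs → altOp k (ρ (n + 1)) vr = 0 →
      AStar A (n + 1) vs = 0 → AStar A (n + 1) vr = 0 →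
      (∃ u : M n, vs + vr = AStar A n u) →
      (∃ us : M n, altOp k (ρ n) us = us ∧ vs = AStar A n us) ∧
      (∃ ur : M n, altOp k (ρ n) ur = 0 ∧ vr = AStar A n ur)) := by
  have hA : AdjSwapCompatible ρ A := ⟨hswap_lt, hswap_eq1, hswap_eq2, hswap_gt⟩
  have hcomm (n : ℕ) (v : M n) : altOp k (ρ (n + 1)) (AStar A n v) = AStar A n (altOp k (ρ n) v) :=
    LinearMap.congr_fun (hA.altOp_comp_AStar n) v
  have hidem (n : ℕ) := isIdempotentElem_altOp (ρ n)
  refine ⟨fun n v hv => by rw [hcomm, hv], fun n v hv => by rw [hcomm, hv, map_zero],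
    fun v hv => exists_split_of_map_eq_zero (hidem 0) (hA.altOp_comp_AStar 0) hv,
    fun vs vr hs hr _ _ h => eq_zero_and_eq_zero_of_add_eq_zero hs hr h, fun n v hv => ?_,
    fun n vs vr hs hr _ _ ⟨u, hu⟩ =>
      exists_split_of_add_eq_map (hidem n) (hA.altOp_comp_AStar n) hs hr hu⟩
  obtain ⟨vs, vr, h⟩ := exists_split_of_map_eq_zero (hidem (n + 1)) (hA.altOp_comp_AStar (n + 1)) hv
  exact ⟨vs, vr, 0, by simpa using h⟩
end

section
/- Let G be a topological group and V a finite-dimensional real vector space regarded as a trivial G-module. Let C_cts^n(G,V)^G be the complex of continuous G-invariant homogeneous cochains, on which Σ_{n+1} acts by permuting the arguments of a cochain. Then the coboundary preserves the sign decomposition C_cts^n(G,V)^G = sC_cts^n(G,V)^G ⊕ rC_cts^n(G,V)^G, and the cohomology of the subcomplex rC_cts^•(G,V)^G vanishes in every degree; equivalently, the inclusion of the alternating subcomplex sC_cts^•(G,V)^G into C_cts^•(G,V)^G induces an isomorphism on cohomology. -/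
/-- `G`-invariance of a homogeneous cochain (the module `V` being a trivial module). -/
def InvFull (G : Type*) [Group G] {V : Type*} [AddCommGroup V] {ℓ : ℕ}
    (f : (Fin ℓ → G) → V) : Prop :=
  ∀ (g : G) (x : Fin ℓ → G), f (fun i => g * x i) = f x

/-- The homogeneous coboundary `δ` on cochains. -/
noncomputable def dFull {G V : Type*} [AddCommGroup V] {ℓ : ℕ}
    (f : (Fin ℓ → G) → V) : (Fin (ℓ + 1) → G) → V :=
  fun x => ∑ i : Fin (ℓ + 1), ((-1 : ℤ) ^ (i : ℕ)) • f (fun j => x (i.succAbove j))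

/-- The alternating projector `Alt = (1/ℓ!) Σ_{σ ∈ Σ_ℓ} sgn(σ) σ` on homogeneous cochains,
where `Σ_ℓ` acts by permuting the arguments. -/
noncomputable def altCochainR {G V : Type*} [AddCommGroup V]
    [Module ℝ V] {ℓ : ℕ} (f : (Fin ℓ → G) → V) : (Fin ℓ → G) → V :=
  fun x => (Nat.factorial ℓ : ℝ)⁻¹ •
    ∑ σ : Equiv.Perm (Fin ℓ), (((Equiv.Perm.sign σ : ℤ) : ℝ)) • f (x ∘ σ)

/-! The alternating projector `Alt` commutes with `δ`: composing a permutation of `Fin (ℓ + 1)`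
with a face map `succAbove i` gives a face map `succAbove k` composed with a permutation of
`Fin ℓ`, and `(k, σ)` runs through all pairs exactly once, with matching signs. It is also
idempotent and the identity in degree `0`.

The cone `K_a f = f (a, ·)` satisfies `K_a δ + δ K_a = 1`. Taking as basepoint the first
argument itself, `H_{m+1} f x = ((1 - Alt - δ H_m) (K_{x_0} f)) x` defines a homotopy
`δ H + H δ = 1 - Alt`. Since the basepoint moves with `x`, `H` commutes with precomposition by
any map `G → G`, so it preserves `G`-invariance; it preserves continuity because it is built
from finitely many substitutions. Hence every continuous invariant cocycle `f` of positive
degree satisfies `f = Alt f + δ (H f)`, and all assertions follow. -/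

open Equiv Finset Function

section Coboundary

variable {G V : Type*} {ℓ : ℕ}

def cone (a : G) (f : (Fin (ℓ + 1) → G) → V) : (Fin ℓ → G) → V :=
  fun y => f (Fin.cons a y)

theorem cone_comp {G' : Type*} (φ : G → G') (a : G) (f : (Fin (ℓ + 1) → G') → V) :
    cone a (fun y => f (φ ∘ y)) = fun x => cone (φ a) f (φ ∘ x) := by
  funext x
  simp [cone, Fin.comp_cons]

variable [AddCommGroup V]

theorem dFull_sub (f g : (Fin ℓ → G) → V) : dFull (f - g) = dFull f - dFull g := by
  funext x
  simp [dFull, smul_sub, sum_sub_distrib]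

theorem dFull_zero : dFull (0 : (Fin ℓ → G) → V) = 0 := by
  funext x
  simp [dFull]

theorem dFull_comp {G' : Type*} (φ : G → G') (f : (Fin ℓ → G') → V) :
    dFull (fun y => f (φ ∘ y)) = fun x => dFull f (φ ∘ x) :=
  rfl

theorem cone_sub (a : G) (f g : (Fin (ℓ + 1) → G) → V) :
    cone a (f - g) = cone a f - cone a g :=
  rfl

theorem cone_dFull (a : G) (f : (Fin (ℓ + 1) → G) → V) :
    cone a (dFull f) = f - dFull (cone a f) := by
  funext y
  have hzero : (Fin.cons a y : Fin (ℓ + 2) → G) ∘ Fin.succAbove 0 = y := by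
    funext j; simp
  have hsucc (i : Fin (ℓ + 1)) : (Fin.cons a y : Fin (ℓ + 2) → G) ∘ i.succ.succAbove =
      Fin.cons a (y ∘ i.succAbove) := by
    funext j
    cases j using Fin.cases <;> simp [Fin.succ_succAbove_succ]
  simp only [cone, dFull, Fin.sum_univ_succ, Pi.sub_apply, Fin.val_zero, pow_zero, one_smul,
    Fin.val_succ, pow_succ, mul_neg_one, neg_smul, sum_neg_distrib, ← comp_def, hzero, hsucc]
  abel

theorem dFull_dFull (f : (Fin ℓ → G) → V) : dFull (dFull f) = 0 := by
  induction ℓ with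
  | zero =>
    funext x
    simp [dFull, Fin.sum_univ_two]
  | succ n ih =>
    funext x
    rw [← Fin.cons_self_tail x]
    change cone (x 0) (dFull (dFull f)) (Fin.tail x) = 0
    rw [cone_dFull, cone_dFull, dFull_sub, ih, sub_zero, sub_self]
    rfl

end Coboundary

section Alternation

theorem Equiv.Perm.sign_cast_mul_self {α : Type*} [DecidableEq α] [Fintype α] (σ : Perm α) :
    ((Perm.sign σ : ℤ) : ℝ) * ((Perm.sign σ : ℤ) : ℝ) = 1 := by
  rw [← Int.cast_mul, ← Units.val_mul, Int.units_mul_self, Units.val_one, Int.cast_one]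

variable {G V : Type*} [AddCommGroup V] [Module ℝ V] {ℓ : ℕ}

theorem altCochainR_sub (f g : (Fin ℓ → G) → V) :
    altCochainR (f - g) = altCochainR f - altCochainR g := by
  funext x
  simp [altCochainR, smul_sub, sum_sub_distrib]

theorem altCochainR_zero : altCochainR (0 : (Fin ℓ → G) → V) = 0 := by
  funext x
  simp [altCochainR]

theorem altCochainR_comp {G' : Type*} (φ : G → G') (f : (Fin ℓ → G') → V) :
    altCochainR (fun y => f (φ ∘ y)) = fun x => altCochainR f (φ ∘ x) :=
  rfl

theorem altCochainR_of_fin_one (f : (Fin 1 → G) → V) : altCochainR f = f := by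
  funext x
  simp [altCochainR, Subsingleton.elim _ (1 : Perm (Fin 1))]

theorem altCochainR_comp_perm (f : (Fin ℓ → G) → V) (x : Fin ℓ → G) (σ : Perm (Fin ℓ)) :
    altCochainR f (x ∘ σ) = ((Perm.sign σ : ℤ) : ℝ) • altCochainR f x := by
  have hreindex : ∑ ρ : Perm (Fin ℓ), ((Perm.sign ρ : ℤ) : ℝ) • f (x ∘ ρ) =
      ((Perm.sign σ : ℤ) : ℝ) • ∑ τ : Perm (Fin ℓ), ((Perm.sign τ : ℤ) : ℝ) • f (x ∘ σ ∘ τ) := by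
    rw [smul_sum]
    refine (Fintype.sum_equiv (Equiv.mulLeft σ) _ _ fun τ => ?_).symm
    simp [smul_smul, Perm.coe_mul]
  simp only [altCochainR, hreindex, smul_smul, comp_assoc]
  rw [mul_left_comm, σ.sign_cast_mul_self, mul_one]

theorem altCochainR_altCochainR (f : (Fin ℓ → G) → V) :
    altCochainR (altCochainR f) = altCochainR f := by
  funext x
  have hfact : (Nat.factorial ℓ : ℝ) ≠ 0 := by positivity
  change (Nat.factorial ℓ : ℝ)⁻¹ • ∑ σ : Perm (Fin ℓ),
    ((Perm.sign σ : ℤ) : ℝ) • altCochainR f (x ∘ σ) = altCochainR f x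
  simp only [altCochainR_comp_perm, smul_smul, Perm.sign_cast_mul_self, one_smul, sum_const,
    card_univ, Fintype.card_perm, Fintype.card_fin, ← Nat.cast_smul_eq_nsmul ℝ,
    inv_mul_cancel₀ hfact]

end Alternation

section AltCoboundary

variable {ℓ : ℕ}

def permThroughSuccAbove (i : Fin (ℓ + 1)) (p : Fin (ℓ + 1) × Perm (Fin ℓ)) :
    Perm (Fin (ℓ + 1)) :=
  p.1.cycleRange⁻¹ * Perm.decomposeFin.symm (0, p.2) * i.cycleRange

theorem permThroughSuccAbove_apply_succAbove (i k : Fin (ℓ + 1)) (σ : Perm (Fin ℓ))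
    (j : Fin ℓ) : permThroughSuccAbove i (k, σ) (i.succAbove j) = k.succAbove (σ j) := by
  simp [permThroughSuccAbove, Perm.mul_apply, Fin.cycleRange_succAbove,
    Perm.decomposeFin_symm_apply_succ, Perm.inv_def, Fin.cycleRange_symm_succ]

theorem sign_permThroughSuccAbove (i k : Fin (ℓ + 1)) (σ : Perm (Fin ℓ)) :
    Perm.sign (permThroughSuccAbove i (k, σ)) = (-1) ^ (k : ℕ) * Perm.sign σ * (-1) ^ (i : ℕ) := by
  simp [permThroughSuccAbove, Fin.sign_cycleRange, Perm.decomposeFin.symm_sign]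

theorem bijective_permThroughSuccAbove (i : Fin (ℓ + 1)) :
    Bijective (permThroughSuccAbove i) := by
  rw [Fintype.bijective_iff_injective_and_card]
  refine ⟨?_, ?_⟩
  · rintro ⟨k, σ⟩ ⟨k', σ'⟩ h
    have hk : k = k' := by
      simpa [permThroughSuccAbove, Perm.mul_apply, Perm.inv_def] using
        DFunLike.congr_fun h (i.cycleRange.symm 0)
    subst hk
    simp only [permThroughSuccAbove, mul_left_inj, mul_right_inj, EmbeddingLike.apply_eq_iff_eq,
      Prod.mk.injEq, true_and] at h
    rw [h]
  · rw [Fintype.card_prod, Fintype.card_perm, Fintype.card_perm, Fintype.card_fin,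
      Fintype.card_fin, Nat.factorial_succ]

variable {G V : Type*} [AddCommGroup V] [Module ℝ V]

theorem sum_sign_smul_comp_succAbove (g : (Fin ℓ → Fin (ℓ + 1)) → V) (i : Fin (ℓ + 1)) :
    ∑ τ : Perm (Fin (ℓ + 1)), ((Perm.sign τ : ℤ) : ℝ) • g (τ ∘ i.succAbove) =
      (-1 : ℤ) ^ (i : ℕ) • ∑ k : Fin (ℓ + 1), (-1 : ℤ) ^ (k : ℕ) •
        ∑ σ : Perm (Fin ℓ), ((Perm.sign σ : ℤ) : ℝ) • g (k.succAbove ∘ σ) := by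
  simp only [smul_sum, ← Fintype.sum_prod_type']
  refine (Fintype.sum_bijective _ (bijective_permThroughSuccAbove i) _ _ fun ⟨k, σ⟩ => ?_).symm
  have hcomp : permThroughSuccAbove i (k, σ) ∘ i.succAbove = k.succAbove ∘ σ :=
    funext (permThroughSuccAbove_apply_succAbove i k σ)
  simp only [hcomp, sign_permThroughSuccAbove, ← Int.cast_smul_eq_zsmul ℝ, smul_smul]
  congr 1
  push_cast
  ring

theorem altCochainR_dFull (f : (Fin ℓ → G) → V) :
    altCochainR (dFull f) = dFull (altCochainR f) := by
  funext x
  have hfact : (Nat.factorial ℓ : ℝ) ≠ 0 := by positivity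
  have hsign (i : Fin (ℓ + 1)) : (-1 : ℤ) ^ (i : ℕ) * (-1 : ℤ) ^ (i : ℕ) = 1 := by
    rw [← mul_pow, neg_one_mul, neg_neg, one_pow]
  have hAlt (k : Fin (ℓ + 1)) :
      ∑ σ : Perm (Fin ℓ), ((Perm.sign σ : ℤ) : ℝ) • f (x ∘ k.succAbove ∘ σ) =
        (Nat.factorial ℓ : ℝ) • altCochainR f (x ∘ k.succAbove) := by
    rw [altCochainR, smul_smul, mul_inv_cancel₀ hfact, one_smul]
    rfl
  have hswap : ∑ τ : Perm (Fin (ℓ + 1)), ((Perm.sign τ : ℤ) : ℝ) • dFull f (x ∘ τ) =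
      ∑ i : Fin (ℓ + 1), (-1 : ℤ) ^ (i : ℕ) •
        ∑ τ : Perm (Fin (ℓ + 1)), ((Perm.sign τ : ℤ) : ℝ) • f (x ∘ τ ∘ i.succAbove) := by
    simp only [dFull, smul_sum]
    rw [sum_comm]
    simp only [smul_comm ((Perm.sign _ : ℤ) : ℝ)]
    rfl
  calc altCochainR (dFull f) x
      = (Nat.factorial (ℓ + 1) : ℝ)⁻¹ • ∑ i : Fin (ℓ + 1), (-1 : ℤ) ^ (i : ℕ) •
        ∑ τ : Perm (Fin (ℓ + 1)), ((Perm.sign τ : ℤ) : ℝ) • f (x ∘ τ ∘ i.succAbove) := by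
        rw [altCochainR, hswap]
    _ = (Nat.factorial (ℓ + 1) : ℝ)⁻¹ •
          ((ℓ + 1) • ((Nat.factorial ℓ : ℝ) • dFull (altCochainR f) x)) := by
        simp only [sum_sign_smul_comp_succAbove (fun ρ => f (x ∘ ρ)), smul_smul, hsign, one_smul,
          sum_const, card_univ, Fintype.card_fin, hAlt, dFull]
        congr 2
        rw [smul_sum]
        exact sum_congr rfl fun (i : Fin (ℓ + 1)) _ =>
          smul_comm ((-1 : ℤ) ^ (i : ℕ)) (Nat.factorial ℓ : ℝ) (altCochainR f (x ∘ i.succAbove))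
    _ = dFull (altCochainR f) x := by
        rw [← Nat.cast_smul_eq_nsmul ℝ, smul_smul, smul_smul, Nat.factorial_succ]
        push_cast
        rw [mul_assoc, inv_mul_cancel₀ (by positivity), one_smul]

end AltCoboundary

section AltHomotopy

variable {G V : Type*} [AddCommGroup V] [Module ℝ V]

noncomputable def altHomotopy : (m : ℕ) → ((Fin (m + 1) → G) → V) → (Fin m → G) → V
  | 0, _ => 0
  | m + 1, f => fun x =>
      (cone (x 0) f - altCochainR (cone (x 0) f) - dFull (altHomotopy m (cone (x 0) f))) x

theorem altHomotopy_sub : ∀ (m : ℕ) (f g : (Fin (m + 1) → G) → V),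
    altHomotopy m (f - g) = altHomotopy m f - altHomotopy m g
  | 0, _, _ => (sub_zero 0).symm
  | m + 1, f, g => by
    funext x
    simp only [altHomotopy, cone_sub, altCochainR_sub, altHomotopy_sub m, dFull_sub, Pi.sub_apply]
    abel

theorem altHomotopy_zero (m : ℕ) : altHomotopy m (0 : (Fin (m + 1) → G) → V) = 0 := by
  simpa using altHomotopy_sub m (0 : (Fin (m + 1) → G) → V) 0

theorem dFull_altHomotopy_add_altHomotopy_dFull : ∀ (m : ℕ) (f : (Fin (m + 1) → G) → V),
    dFull (altHomotopy m f) + altHomotopy (m + 1) (dFull f) = f - altCochainR f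
  | 0, f => by
    funext x
    simp [altHomotopy, dFull_zero, altCochainR_of_fin_one]
  | m + 1, f => by
    funext x
    have hcone := cone_dFull (x 0) f
    have ih := dFull_altHomotopy_add_altHomotopy_dFull m (cone (x 0) f)
    have hdH : dFull (altHomotopy (m + 1) (cone (x 0) (dFull f))) = dFull (altHomotopy (m + 1) f) -
        dFull (cone (x 0) f) + altCochainR (dFull (cone (x 0) f)) := by
      rw [hcone, altHomotopy_sub, eq_sub_of_add_eq' ih, dFull_sub, dFull_sub, dFull_sub,
        dFull_dFull, altCochainR_dFull]
      abel
    change dFull (altHomotopy (m + 1) f) x + (cone (x 0) (dFull f) -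
      altCochainR (cone (x 0) (dFull f)) - dFull (altHomotopy (m + 1) (cone (x 0) (dFull f)))) x =
        (f - altCochainR f) x
    rw [hdH, hcone, altCochainR_sub]
    simp only [Pi.sub_apply, Pi.add_apply]
    abel

theorem altHomotopy_comp {G' : Type*} (φ : G → G') : ∀ (m : ℕ) (f : (Fin (m + 1) → G') → V),
    altHomotopy m (fun y => f (φ ∘ y)) = fun x => altHomotopy m f (φ ∘ x)
  | 0, _ => rfl
  | m + 1, f => by
    funext x
    simp only [altHomotopy, cone_comp, altCochainR_comp, altHomotopy_comp φ m, dFull_comp]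
    rfl

end AltHomotopy

section Invariance

variable {G V : Type*} [Group G] [AddCommGroup V] {ℓ : ℕ}

theorem invFull_iff_comp {f : (Fin ℓ → G) → V} :
    InvFull G f ↔ ∀ g : G, (fun x => f ((g * ·) ∘ x)) = f :=
  forall_congr' fun _ => funext_iff.symm

theorem InvFull.sub {f f' : (Fin ℓ → G) → V} (hf : InvFull G f) (hf' : InvFull G f') :
    InvFull G (f - f') :=
  fun g x => by simp only [Pi.sub_apply, hf g x, hf' g x]

theorem InvFull.dFull {f : (Fin ℓ → G) → V} (hf : InvFull G f) : InvFull G (dFull f) :=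
  invFull_iff_comp.2 fun g => by rw [← dFull_comp, invFull_iff_comp.1 hf g]

variable [Module ℝ V]

theorem InvFull.altCochainR {f : (Fin ℓ → G) → V} (hf : InvFull G f) :
    InvFull G (altCochainR f) :=
  invFull_iff_comp.2 fun g => by rw [← altCochainR_comp, invFull_iff_comp.1 hf g]

theorem InvFull.altHomotopy {m : ℕ} {f : (Fin (m + 1) → G) → V} (hf : InvFull G f) :
    InvFull G (altHomotopy m f) :=
  invFull_iff_comp.2 fun g => by rw [← altHomotopy_comp, invFull_iff_comp.1 hf g]

end Invariance

section Continuity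

universe u

variable {G : Type u} {V : Type*} [TopologicalSpace G] [AddCommGroup V] [TopologicalSpace V]
  [IsTopologicalAddGroup V] {ℓ : ℕ}

theorem continuous_uncurry_dFull {P : Type*} [TopologicalSpace P] {F : P → (Fin ℓ → G) → V}
    (hF : Continuous (uncurry F)) : Continuous (uncurry fun p => dFull (F p)) := by
  unfold dFull
  fun_prop

theorem Continuous.dFull {f : (Fin ℓ → G) → V} (hf : Continuous f) : Continuous (dFull f) :=
  (continuous_uncurry_dFull (F := fun _ : Unit => f) (hf.comp continuous_snd)).uncurry_left ()

variable [Module ℝ V] [ContinuousConstSMul ℝ V]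

theorem continuous_uncurry_altCochainR {P : Type*} [TopologicalSpace P]
    {F : P → (Fin ℓ → G) → V} (hF : Continuous (uncurry F)) :
    Continuous (uncurry fun p => altCochainR (F p)) := by
  unfold altCochainR
  fun_prop

theorem Continuous.altCochainR {f : (Fin ℓ → G) → V} (hf : Continuous f) :
    Continuous (altCochainR f) :=
  (continuous_uncurry_altCochainR (F := fun _ : Unit => f) (hf.comp continuous_snd)).uncurry_left ()

-- `P` lives in the universe of `G` because the recursive call is at the parameter space `P × G`.
theorem continuous_uncurry_altHomotopy : ∀ (m : ℕ) {P : Type u} [TopologicalSpace P]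
    {F : P → (Fin (m + 1) → G) → V}, Continuous (uncurry F) →
    Continuous (uncurry fun p => altHomotopy m (F p))
  | 0, _, _, _, _ => continuous_const
  | m + 1, P, _, F, hF => by
    have hcone : Continuous (uncurry fun q : P × G => cone q.2 (F q.1)) :=
      hF.comp ((continuous_fst.comp continuous_fst).prodMk
        ((continuous_snd.comp continuous_fst).finCons continuous_snd))
    have hbase : Continuous fun q : P × (Fin (m + 1) → G) => ((q.1, q.2 0), q.2) := by
      fun_prop
    exact ((hcone.sub (continuous_uncurry_altCochainR hcone)).sub
      (continuous_uncurry_dFull (continuous_uncurry_altHomotopy m hcone))).comp hbase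

theorem Continuous.altHomotopy {m : ℕ} {f : (Fin (m + 1) → G) → V} (hf : Continuous f) :
    Continuous (altHomotopy m f) :=
  (continuous_uncurry_altHomotopy m (F := fun _ : PUnit.{u + 1} => f)
    (hf.comp continuous_snd)).uncurry_left PUnit.unit

end Continuity

theorem dFull_altHomotopy_of_dFull_eq_zero {G V : Type*} [AddCommGroup V] [Module ℝ V] {m : ℕ}
    {f : (Fin (m + 1) → G) → V} (hf : dFull f = 0) :
    dFull (altHomotopy m f) = f - altCochainR f := by
  rw [← dFull_altHomotopy_add_altHomotopy_dFull, hf, altHomotopy_zero, add_zero]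

theorem continuous_group_cohomology_is_alternating_general
    (G : Type*) [Group G] [TopologicalSpace G]
    (V : Type*) [AddCommGroup V] [Module ℝ V] [TopologicalSpace V]
    [IsTopologicalAddGroup V] [ContinuousSMul ℝ V] :
    -- δ preserves continuity, invariance and the sign decomposition
    (∀ (ℓ : ℕ) (f : (Fin (ℓ + 1) → G) → V), Continuous f → InvFull G f →
      Continuous (dFull f) ∧ InvFull G (dFull f) ∧
      (altCochainR f = f → altCochainR (dFull f) = dFull f) ∧
      (altCochainR f = 0 → altCochainR (dFull f) = 0)) ∧
    -- H^0 of the r-part vanishes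
    (∀ f : (Fin 1 → G) → V, Continuous f → InvFull G f → altCochainR f = 0 →
      dFull f = 0 → f = 0) ∧
    -- H^{n+1} of the r-part vanishes
    (∀ (n : ℕ) (f : (Fin (n + 2) → G) → V), Continuous f → InvFull G f →
      altCochainR f = 0 → dFull f = 0 →
      ∃ w : (Fin (n + 1) → G) → V,
        Continuous w ∧ InvFull G w ∧ altCochainR w = 0 ∧ f = dFull w) ∧
    -- the inclusion of the s-part is bijective on H^0
    (∀ f : (Fin 1 → G) → V, Continuous f → InvFull G f → dFull f = 0 →
      altCochainR f = f) ∧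
    -- the inclusion of the s-part is surjective on H^{n+1}
    (∀ (n : ℕ) (f : (Fin (n + 2) → G) → V), Continuous f → InvFull G f → dFull f = 0 →
      ∃ u : (Fin (n + 2) → G) → V,
        Continuous u ∧ InvFull G u ∧ altCochainR u = u ∧ dFull u = 0 ∧
        ∃ w : (Fin (n + 1) → G) → V, Continuous w ∧ InvFull G w ∧ f = u + dFull w) ∧
    -- the inclusion of the s-part is injective on H^{n+1}
    (∀ (n : ℕ) (u : (Fin (n + 2) → G) → V), Continuous u → InvFull G u →
      altCochainR u = u → dFull u = 0 →
      (∃ w : (Fin (n + 1) → G) → V, Continuous w ∧ InvFull G w ∧ u = dFull w) →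
      ∃ ws : (Fin (n + 1) → G) → V,
        Continuous ws ∧ InvFull G ws ∧ altCochainR ws = ws ∧ u = dFull ws) := by
  refine ⟨fun ℓ f hc hi => ⟨hc.dFull, hi.dFull, fun h => by rw [altCochainR_dFull, h],
      fun h => by rw [altCochainR_dFull, h, dFull_zero]⟩,
    fun f _ _ h _ => (altCochainR_of_fin_one f).symm.trans h, fun n f hc hi ha hd => ?_,
    fun f _ _ _ => altCochainR_of_fin_one f, fun n f hc hi hd => ?_,
    fun n u _ _ ha _ ⟨w, hwc, hwi, hw⟩ => ?_⟩
  · have hH : dFull (altHomotopy (n + 1) f) = f := by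
      rw [dFull_altHomotopy_of_dFull_eq_zero hd, ha, sub_zero]
    refine ⟨altHomotopy (n + 1) f - altCochainR (altHomotopy (n + 1) f),
      hc.altHomotopy.sub hc.altHomotopy.altCochainR, hi.altHomotopy.sub hi.altHomotopy.altCochainR,
      by rw [altCochainR_sub, altCochainR_altCochainR, sub_self], ?_⟩
    rw [dFull_sub, ← altCochainR_dFull, hH, ha, sub_zero]
  · refine ⟨altCochainR f, hc.altCochainR, hi.altCochainR, altCochainR_altCochainR f,
      by rw [← altCochainR_dFull, hd, altCochainR_zero], altHomotopy (n + 1) f, hc.altHomotopy,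
      hi.altHomotopy, ?_⟩
    rw [dFull_altHomotopy_of_dFull_eq_zero hd, add_sub_cancel]
  · exact ⟨altCochainR w, hwc.altCochainR, hwi.altCochainR, altCochainR_altCochainR w,
      by rw [← altCochainR_dFull, ← hw, ha]⟩

/-- For a topological group `G` and a finite-dimensional real vector space `V` (a trivial
`G`-module), the coboundary on continuous invariant homogeneous cochains preserves the sign
decomposition, and the cohomology of the complementary subcomplex `rC_cts^•(G,V)^G` vanishes
in every degree; equivalently, the inclusion of the alternating subcomplex
`sC_cts^•(G,V)^G` induces an isomorphism on continuous group cohomology. -/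
theorem continuous_group_cohomology_is_alternating
    (G : Type*) [Group G] [TopologicalSpace G] [IsTopologicalGroup G]
    (V : Type*) [AddCommGroup V] [Module ℝ V] [TopologicalSpace V]
    [IsTopologicalAddGroup V] [ContinuousSMul ℝ V] [FiniteDimensional ℝ V] :
    -- δ preserves continuity, invariance and the sign decomposition
    (∀ (ℓ : ℕ) (f : (Fin (ℓ + 1) → G) → V), Continuous f → InvFull G f →
      Continuous (dFull f) ∧ InvFull G (dFull f) ∧
      (altCochainR f = f → altCochainR (dFull f) = dFull f) ∧
      (altCochainR f = 0 → altCochainR (dFull f) = 0)) ∧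
    -- H^0 of the r-part vanishes
    (∀ f : (Fin 1 → G) → V, Continuous f → InvFull G f → altCochainR f = 0 →
      dFull f = 0 → f = 0) ∧
    -- H^{n+1} of the r-part vanishes
    (∀ (n : ℕ) (f : (Fin (n + 2) → G) → V), Continuous f → InvFull G f →
      altCochainR f = 0 → dFull f = 0 →
      ∃ w : (Fin (n + 1) → G) → V,
        Continuous w ∧ InvFull G w ∧ altCochainR w = 0 ∧ f = dFull w) ∧
    -- the inclusion of the s-part is bijective on H^0
    (∀ f : (Fin 1 → G) → V, Continuous f → InvFull G f → dFull f = 0 →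
      altCochainR f = f) ∧
    -- the inclusion of the s-part is surjective on H^{n+1}
    (∀ (n : ℕ) (f : (Fin (n + 2) → G) → V), Continuous f → InvFull G f → dFull f = 0 →
      ∃ u : (Fin (n + 2) → G) → V,
        Continuous u ∧ InvFull G u ∧ altCochainR u = u ∧ dFull u = 0 ∧
        ∃ w : (Fin (n + 1) → G) → V, Continuous w ∧ InvFull G w ∧ f = u + dFull w) ∧
    -- the inclusion of the s-part is injective on H^{n+1}
    (∀ (n : ℕ) (u : (Fin (n + 2) → G) → V), Continuous u → InvFull G u →
      altCochainR u = u → dFull u = 0 →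
      (∃ w : (Fin (n + 1) → G) → V, Continuous w ∧ InvFull G w ∧ u = dFull w) →
      ∃ ws : (Fin (n + 1) → G) → V,
        Continuous ws ∧ InvFull G ws ∧ altCochainR ws = ws ∧ u = dFull ws) :=
  continuous_group_cohomology_is_alternating_general G V
end
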